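/- arXiv:2305.06122 — 4 statements merged into one kernel-verified Lean document; each statement's English description precedes it below -/
import Mathlib

section
/- Let N ≥ 1, let D ⊆ ℝ^N be a convex set, and let k : ℝ^N × ℝ^N → ℝ be symmetric (k(x,y) = k(y,x)) and continuously differentiable in its second argument on D × D, with gradient in the second argument denoted ∇₂k. Suppose there is a constant C₁ ≥ 0 such that ‖∇₂k(x,ξ) − ∇₂k(y,η)‖ ≤ C₁(‖x−y‖ + ‖ξ−η‖) for all x, y, ξ, η ∈ D. Then for all x, y ∈ D: k(x,x) − 2 k(x,y) + k(y,y) ≤ 2 C₁ ‖x−y‖². -/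
/-- The key kernel estimate in the proof of Lemma 4 of the paper: for a
symmetric kernel `k` on a convex set `D`, differentiable in its second argument
with gradient `g` satisfying a Lipschitz-type bound with constant `C₁`, the
squared RKHS distance of the canonical features,
`k(x,x) − 2k(x,y) + k(y,y)`, is bounded by `2 C₁ ‖x−y‖²`. -/
theorem kernel_feature_distance_bound {N : ℕ} (hN : 1 ≤ N)
    (D : Set (EuclideanSpace ℝ (Fin N))) (hD : Convex ℝ D)
    (k : EuclideanSpace ℝ (Fin N) → EuclideanSpace ℝ (Fin N) → ℝ)
    (hsymm : ∀ x y, k x y = k y x)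
    (g : EuclideanSpace ℝ (Fin N) → EuclideanSpace ℝ (Fin N) →
      EuclideanSpace ℝ (Fin N))
    (hgrad : ∀ x ∈ D, ∀ y ∈ D, HasGradientWithinAt (fun z => k x z) (g x y) D y)
    (C₁ : ℝ) (hC₁ : 0 ≤ C₁)
    (hlip : ∀ x ∈ D, ∀ y ∈ D, ∀ ξ ∈ D, ∀ η ∈ D,
      ‖g x ξ - g y η‖ ≤ C₁ * (‖x - y‖ + ‖ξ - η‖)) :
    ∀ x ∈ D, ∀ y ∈ D, k x x - 2 * k x y + k y y ≤ 2 * C₁ * ‖x - y‖ ^ 2 := by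
  intro x hx y hy
  set f : EuclideanSpace ℝ (Fin N) → ℝ := fun z => k x z - k y z with hf
  have hfd : ∀ z ∈ D, HasFDerivWithinAt f
      ((InnerProductSpace.toDual ℝ _ (g x z)) - (InnerProductSpace.toDual ℝ _ (g y z))) D z := by
    intro z hz
    exact ((hgrad x hx z hz).hasFDerivWithinAt).sub ((hgrad y hy z hz).hasFDerivWithinAt)
  have hbound : ∀ z ∈ D,
      ‖(InnerProductSpace.toDual ℝ _ (g x z)) - (InnerProductSpace.toDual ℝ _ (g y z))‖
        ≤ C₁ * ‖x - y‖ := by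
    intro z hz
    rw [← map_sub, (InnerProductSpace.toDual ℝ _).norm_map]
    have := hlip x hx y hy z hz z hz
    simpa using this
  have key : ‖f x - f y‖ ≤ C₁ * ‖x - y‖ * ‖x - y‖ :=
    hD.norm_image_sub_le_of_norm_hasFDerivWithin_le hfd hbound hy hx
  have heq : f x - f y = k x x - 2 * k x y + k y y := by
    simp only [hf]
    rw [hsymm y x]
    ring
  have h1 : k x x - 2 * k x y + k y y ≤ C₁ * ‖x - y‖ * ‖x - y‖ := by
    rw [← heq]; exact le_trans (le_abs_self _) key
  nlinarith [norm_nonneg (x - y), sq_nonneg (‖x - y‖)]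
end

section
/- Let N ≥ 1 and α, β > 0, set C := β(1 + √(1 + α/β)), and define v : ℝ^N → ℝ by v(x) = C e^{‖x‖²} − C. Then v is differentiable everywhere with gradient ∇v(x) = 2 C e^{‖x‖²} x, and v solves the Hamilton–Jacobi–Bellman equation of the academic model problem: for every x ∈ ℝ^N, ⟨∇v(x), x⟩ ‖x‖² − (e^{−‖x‖²} / (4β)) ⟨∇v(x), x⟩² + α e^{‖x‖²} ‖x‖⁴ = 0. Moreover v(x) ≥ 0 for all x with equality exactly at x = 0. -/
/-!
The candidate `v(x) = C (e^{‖x‖²} − 1)` is radial, so its gradient is `2 C e^{‖x‖²} x`. Substituted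
into the Hamilton–Jacobi–Bellman equation, the residual factors as
`e^{‖x‖²} ‖x‖⁴ (2C − C²/β + α)`, and `C = β(1 + √(1 + α/β))` is the positive root of this
quadratic; positivity of `C` gives `v ≥ 0` with equality only at the origin.
-/

open Real
open scoped RealInnerProductSpace

section

variable {E : Type*} [NormedAddCommGroup E]

theorem HasDerivAt.hasGradientAt_comp_norm_sq [InnerProductSpace ℝ E] [CompleteSpace E]
    {g : ℝ → ℝ} {g' : ℝ} {x : E} (hg : HasDerivAt g g' (‖x‖ ^ 2)) :
    HasGradientAt (fun y => g (‖y‖ ^ 2)) ((2 * g') • x) x := by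
  rw [hasGradientAt_iff_hasFDerivAt]
  refine (hg.comp_hasFDerivAt x (hasStrictFDerivAt_norm_sq x).hasFDerivAt).congr_fderiv ?_
  ext y
  simp only [smul_apply, coe_innerSL_apply, nsmul_eq_mul, Nat.cast_ofNat,
    smul_eq_mul, map_smul, InnerProductSpace.toDual_apply_apply]
  ring

theorem mul_exp_norm_sq_sub_nonneg {C : ℝ} (hC : 0 ≤ C) (x : E) :
    0 ≤ C * exp (‖x‖ ^ 2) - C := by
  have : 1 ≤ exp (‖x‖ ^ 2) := one_le_exp (by positivity)
  nlinarith

theorem mul_exp_norm_sq_sub_eq_zero_iff {C : ℝ} (hC : C ≠ 0) {x : E} :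
    C * exp (‖x‖ ^ 2) - C = 0 ↔ x = 0 := by
  rw [← mul_sub_one, mul_eq_zero, or_iff_right hC, sub_eq_zero, exp_eq_one_iff,
    sq_eq_zero_iff, norm_eq_zero]

theorem hjb_residual_eq_zero [InnerProductSpace ℝ E] {α β C : ℝ}
    (hC : 2 * C - C ^ 2 / β + α = 0) (x : E) :
    ⟪(2 * C * exp (‖x‖ ^ 2)) • x, x⟫ * ‖x‖ ^ 2
        - exp (-‖x‖ ^ 2) / (4 * β) * ⟪(2 * C * exp (‖x‖ ^ 2)) • x, x⟫ ^ 2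
        + α * exp (‖x‖ ^ 2) * ‖x‖ ^ 4 = 0 := by
  have hexp : exp (-‖x‖ ^ 2) * exp (‖x‖ ^ 2) = 1 := by rw [← exp_add, neg_add_cancel, exp_zero]
  rw [real_inner_smul_self_left]
  linear_combination (exp (‖x‖ ^ 2) * ‖x‖ ^ 4) * hC
    - (C ^ 2 * exp (‖x‖ ^ 2) * ‖x‖ ^ 4 / β) * hexp

end

theorem riccati_root (α : ℝ) {β : ℝ} (hβ : β ≠ 0) (hαβ : 0 ≤ 1 + α / β) :
    2 * (β * (1 + √(1 + α / β))) - (β * (1 + √(1 + α / β))) ^ 2 / β + α = 0 := by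
  have hs : √(1 + α / β) ^ 2 = 1 + α / β := sq_sqrt hαβ
  generalize √(1 + α / β) = s at hs ⊢
  rw [mul_pow, sq β, mul_assoc, mul_div_cancel_left₀ _ hβ]
  linear_combination -β * hs - mul_div_cancel₀ α hβ

theorem academic_value_function_general {N : ℕ} (α β : ℝ)
    (hα : 0 < α) (hβ : 0 < β) :
    let C : ℝ := β * (1 + Real.sqrt (1 + α / β))
    let v : EuclideanSpace ℝ (Fin N) → ℝ := fun x => C * Real.exp (‖x‖ ^ 2) - C
    let Dv : EuclideanSpace ℝ (Fin N) → EuclideanSpace ℝ (Fin N) :=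
      fun x => (2 * C * Real.exp (‖x‖ ^ 2)) • x
    (∀ x, HasGradientAt v (Dv x) x) ∧
    (∀ x, (inner ℝ (Dv x) x : ℝ) * ‖x‖ ^ 2
        - Real.exp (-‖x‖ ^ 2) / (4 * β) * (inner ℝ (Dv x) x : ℝ) ^ 2
        + α * Real.exp (‖x‖ ^ 2) * ‖x‖ ^ 4 = 0) ∧
    (∀ x, 0 ≤ v x) ∧ (∀ x, v x = 0 ↔ x = 0) := by
  intro C v Dv
  have hC : 0 < C := by positivity
  refine ⟨fun x => ?_, hjb_residual_eq_zero (riccati_root α hβ.ne' (by positivity)),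
    mul_exp_norm_sq_sub_nonneg hC.le, fun x => mul_exp_norm_sq_sub_eq_zero_iff hC.ne'⟩
  have hv := ((hasDerivAt_exp (‖x‖ ^ 2)).const_mul C).sub_const C
  simpa only [Dv, mul_assoc] using hv.hasGradientAt_comp_norm_sq

/-- The value function of the academic model problem: with
`C = β(1 + √(1 + α/β))`, the function `v(x) = C e^{‖x‖²} − C` is differentiable
with gradient `∇v(x) = 2C e^{‖x‖²} x`, solves the Hamilton–Jacobi–Bellman
equation `⟨∇v(x),x⟩‖x‖² − (e^{−‖x‖²}/(4β))⟨∇v(x),x⟩² + α e^{‖x‖²}‖x‖⁴ = 0`,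
and is nonnegative, vanishing exactly at `x = 0`. -/
theorem academic_value_function {N : ℕ} (hN : 1 ≤ N) (α β : ℝ)
    (hα : 0 < α) (hβ : 0 < β) :
    let C : ℝ := β * (1 + Real.sqrt (1 + α / β))
    let v : EuclideanSpace ℝ (Fin N) → ℝ := fun x => C * Real.exp (‖x‖ ^ 2) - C
    let Dv : EuclideanSpace ℝ (Fin N) → EuclideanSpace ℝ (Fin N) :=
      fun x => (2 * C * Real.exp (‖x‖ ^ 2)) • x
    (∀ x, HasGradientAt v (Dv x) x) ∧
    (∀ x, (inner ℝ (Dv x) x : ℝ) * ‖x‖ ^ 2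
        - Real.exp (-‖x‖ ^ 2) / (4 * β) * (inner ℝ (Dv x) x : ℝ) ^ 2
        + α * Real.exp (‖x‖ ^ 2) * ‖x‖ ^ 4 = 0) ∧
    (∀ x, 0 ≤ v x) ∧ (∀ x, v x = 0 ↔ x = 0) :=
  academic_value_function_general α β hα hβ
end

section
/- Let α, β > 0, set C := β(1 + √(1 + α/β)) and r₁ := √(log(2 + 2√(1 + α/β))). Then: (a) for every r ≥ 0, 1 − (2C/β) e^{−r²} < 0 if and only if r < r₁; and (b) for every N ≥ 1, with v(x) = C e^{‖x‖²} − C and the approximate closed-loop vector field h(x) = (1 − (2C/β) e^{−‖x‖²}) ‖x‖² x on ℝ^N, one has ⟨∇v(x), h(x)⟩ < 0 for every x with 0 < ‖x‖ < r₁. -/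
open Real

theorem one_sub_mul_exp_neg_sq_neg_iff {K r : ℝ} (hK : 0 < K) (hr : 0 ≤ r) :
    1 - K * exp (-r ^ 2) < 0 ↔ r < √(log K) := by
  have hexp : K * exp (-r ^ 2) = exp (log K - r ^ 2) := by
    rw [exp_sub, exp_log hK, exp_neg, div_eq_mul_inv]
  rw [sub_neg, hexp, one_lt_exp_iff, sub_pos, lt_sqrt hr]

theorem real_inner_smul_self_smul_self_neg {E : Type*} [NormedAddCommGroup E]
    [InnerProductSpace ℝ E] {a b : ℝ} {x : E} (ha : 0 < a) (hb : b < 0) (hx : x ≠ 0) :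
    inner ℝ (a • x) (b • x) < 0 := by
  rw [real_inner_smul_left, real_inner_smul_right, real_inner_self_eq_norm_sq]
  exact mul_neg_of_pos_of_neg ha (mul_neg_of_neg_of_pos hb (by positivity))

theorem academic_approximate_stability_general (α β : ℝ) (hβ : 0 < β) :
    let C : ℝ := β * (1 + Real.sqrt (1 + α / β))
    let r₁ : ℝ := Real.sqrt (Real.log (2 + 2 * Real.sqrt (1 + α / β)))
    (∀ r : ℝ, 0 ≤ r →
      (1 - 2 * C / β * Real.exp (-r ^ 2) < 0 ↔ r < r₁)) ∧
    (∀ N : ℕ, 1 ≤ N → ∀ x : EuclideanSpace ℝ (Fin N),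
      0 < ‖x‖ → ‖x‖ < r₁ →
      (inner ℝ ((2 * C * Real.exp (‖x‖ ^ 2)) • x)
        (((1 - 2 * C / β * Real.exp (-‖x‖ ^ 2)) * ‖x‖ ^ 2) • x) : ℝ) < 0) := by
  intro C r₁
  have hCK : 2 * C / β = 2 + 2 * √(1 + α / β) := by
    simp only [C]
    field_simp
  have damping : ∀ r : ℝ, 0 ≤ r → (1 - 2 * C / β * exp (-r ^ 2) < 0 ↔ r < r₁) :=
    fun r hr => hCK ▸ one_sub_mul_exp_neg_sq_neg_iff (by positivity) hr
  refine ⟨damping, fun N _ x hx hxr => ?_⟩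
  have hC : 0 < C := by positivity
  exact real_inner_smul_self_smul_self_neg (by positivity)
    (mul_neg_of_neg_of_pos ((damping _ (norm_nonneg x)).2 hxr) (by positivity))
    (norm_pos_iff.1 hx)

/-- Stability region of the approximate (quadratic-value-function) closed loop
of the academic model problem: with `C = β(1 + √(1+α/β))` and
`r₁ = √(log(2 + 2√(1+α/β)))`, (a) the damping factor `1 − (2C/β)e^{−r²}` is
negative exactly for `r < r₁`, and (b) the true value function
`v(x) = C e^{‖x‖²} − C` (with gradient `2C e^{‖x‖²}x`) is a Lyapunov function
for the approximate closed-loop field `h(x) = (1 − (2C/β)e^{−‖x‖²})‖x‖² x`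
on the punctured ball `0 < ‖x‖ < r₁`. -/
theorem academic_approximate_stability (α β : ℝ) (hα : 0 < α) (hβ : 0 < β) :
    let C : ℝ := β * (1 + Real.sqrt (1 + α / β))
    let r₁ : ℝ := Real.sqrt (Real.log (2 + 2 * Real.sqrt (1 + α / β)))
    (∀ r : ℝ, 0 ≤ r →
      (1 - 2 * C / β * Real.exp (-r ^ 2) < 0 ↔ r < r₁)) ∧
    (∀ N : ℕ, 1 ≤ N → ∀ x : EuclideanSpace ℝ (Fin N),
      0 < ‖x‖ → ‖x‖ < r₁ →
      (inner ℝ ((2 * C * Real.exp (‖x‖ ^ 2)) • x)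
        (((1 - 2 * C / β * Real.exp (-‖x‖ ^ 2)) * ‖x‖ ^ 2) • x) : ℝ) < 0) :=
  academic_approximate_stability_general α β hβ
end

section
/- Let N ≥ 1, let Q ∈ ℝ^{N×N} be symmetric positive definite, let p : ℝ^N → ℝ be differentiable, and define the structured surrogate S : ℝ^N → ℝ by S(x) = (√(xᵀQx) + p(x))². Then: (a) at every x ≠ 0, S is differentiable with gradient ∇S(x) = 2(√(xᵀQx) + p(x)) (Qx/√(xᵀQx) + ∇p(x)); and (b) if at a point x_j ≠ 0 and for values v_j > 0 and w_j ∈ ℝ^N the interpolation data conditions p(x_j) = √(v_j) − √(x_jᵀQx_j) and ∇p(x_j) = w_j/(2√(v_j)) − Qx_j/√(x_jᵀQx_j) hold, then S(x_j) = v_j and ∇S(x_j) = w_j. -/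
/-!
Since `Q` is positive definite, `q x = ⟪x, Qx⟫` is positive for `x ≠ 0`, so `√q` is
differentiable there with gradient `Qx / √(q x)`, and (a) is the chain rule for the square.
For (b), the value condition makes `√q + p = √v` at `x_j` and the gradient condition makes
`∇(√q + p) = w / (2√v)` there; squaring turns these into `S = v` and `∇S = 2√v · w / (2√v) = w`.
-/

open InnerProductSpace

section Gradient

variable {F : Type*} [NormedAddCommGroup F] [InnerProductSpace ℝ F] [CompleteSpace F]
  {f g : F → ℝ} {a b x : F}

theorem HasGradientAt.add (hf : HasGradientAt f a x) (hg : HasGradientAt g b x) :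
    HasGradientAt (fun y => f y + g y) (a + b) x := by
  rw [hasGradientAt_iff_hasFDerivAt, map_add] at *
  exact hf.add hg

theorem HasDerivAt.comp_hasGradientAt {u : ℝ → ℝ} {c : ℝ} (hu : HasDerivAt u c (f x))
    (hf : HasGradientAt f a x) : HasGradientAt (fun y => u (f y)) (c • a) x := by
  rw [hasGradientAt_iff_hasFDerivAt, map_smul] at *
  exact hu.comp_hasFDerivAt x hf

theorem HasGradientAt.sq (hf : HasGradientAt f a x) :
    HasGradientAt (fun y => f y ^ 2) ((2 * f x) • a) x := by
  simpa using (hasDerivAt_pow 2 (f x)).comp_hasGradientAt hf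

theorem HasGradientAt.sqrt (hf : HasGradientAt f a x) (hx : f x ≠ 0) :
    HasGradientAt (fun y => √(f y)) ((2 * √(f x))⁻¹ • a) x := by
  simpa using (Real.hasDerivAt_sqrt hx).comp_hasGradientAt hf

theorem LinearMap.IsSymmetric.hasGradientAt_inner_self [FiniteDimensional ℝ F]
    {L : F →ₗ[ℝ] F} (hL : L.IsSymmetric) (x : F) :
    HasGradientAt (fun y => ⟪y, L y⟫_ℝ) ((2 : ℝ) • L x) x := by
  rw [hasGradientAt_iff_hasFDerivAt]
  refine ((hasFDerivAt_id x).inner ℝ (LinearMap.toContinuousLinearMap L).hasFDerivAt)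
    |>.congr_fderiv ?_
  ext y
  simp [fderivInnerCLM_apply, real_inner_comm (L x) y, hL x y, two_mul]

theorem LinearMap.IsSymmetric.hasGradientAt_sqrt_inner_self [FiniteDimensional ℝ F]
    {L : F →ₗ[ℝ] F} (hL : L.IsSymmetric) (hx : 0 < ⟪x, L x⟫_ℝ) :
    HasGradientAt (fun y => √⟪y, L y⟫_ℝ) ((√⟪x, L x⟫_ℝ)⁻¹ • L x) x := by
  have h := (hL.hasGradientAt_inner_self x).sqrt hx.ne'
  rwa [smul_smul, mul_inv_rev, mul_assoc, inv_mul_cancel₀ two_ne_zero, mul_one] at h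

theorem hasGradientAt_sq_add_of_sqrt_data {r p : F → ℝ} {w : F} {v : ℝ} (hv : 0 < v)
    (hr : HasGradientAt r a x) (hp : HasGradientAt p ((2 * √v)⁻¹ • w - a) x)
    (hpx : p x = √v - r x) :
    (r x + p x) ^ 2 = v ∧ HasGradientAt (fun y => (r y + p y) ^ 2) w x := by
  have hsum : r x + p x = √v := by rw [hpx]; ring
  refine ⟨by rw [hsum, Real.sq_sqrt hv.le], ?_⟩
  convert (hr.add hp).sq using 1
  have h2 : 2 * √v ≠ 0 := by positivity
  rw [hsum, add_sub_cancel, smul_smul, mul_inv_cancel₀ h2, one_smul]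

end Gradient

theorem Matrix.PosDef.inner_toEuclideanLin_pos {n : Type*} [Fintype n] [DecidableEq n]
    {Q : Matrix n n ℝ} (hQ : Q.PosDef) {x : EuclideanSpace ℝ n} (hx : x ≠ 0) :
    0 < ⟪x, Q.toEuclideanLin x⟫_ℝ := by
  have := hQ.dotProduct_mulVec_pos (x := WithLp.ofLp x) (by simpa using hx)
  simpa [EuclideanSpace.inner_eq_star_dotProduct, dotProduct_comm] using this

theorem structured_surrogate_interpolation_general {N : ℕ}
    (Q : Matrix (Fin N) (Fin N) ℝ) (hQ : Q.PosDef)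
    (p : EuclideanSpace ℝ (Fin N) → ℝ)
    (Dp : EuclideanSpace ℝ (Fin N) → EuclideanSpace ℝ (Fin N))
    (hp : ∀ x, HasGradientAt p (Dp x) x) :
    let q : EuclideanSpace ℝ (Fin N) → ℝ :=
      fun x => (inner ℝ x (Matrix.toEuclideanLin Q x) : ℝ)
    let S : EuclideanSpace ℝ (Fin N) → ℝ :=
      fun x => (Real.sqrt (q x) + p x) ^ 2
    (∀ x : EuclideanSpace ℝ (Fin N), x ≠ 0 →
      HasGradientAt S ((2 * (Real.sqrt (q x) + p x)) •
        ((Real.sqrt (q x))⁻¹ • Matrix.toEuclideanLin Q x + Dp x)) x) ∧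
    (∀ (xj : EuclideanSpace ℝ (Fin N)) (vj : ℝ) (wj : EuclideanSpace ℝ (Fin N)),
      xj ≠ 0 → 0 < vj →
      p xj = Real.sqrt vj - Real.sqrt (q xj) →
      Dp xj = (2 * Real.sqrt vj)⁻¹ • wj -
        (Real.sqrt (q xj))⁻¹ • Matrix.toEuclideanLin Q xj →
      S xj = vj ∧ HasGradientAt S wj xj) := by
  intro q S
  have hsym : Q.toEuclideanLin.IsSymmetric := Matrix.isSymmetric_toEuclideanLin_iff.mpr hQ.isHermitian
  have hsqrt_q : ∀ x, x ≠ 0 →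
      HasGradientAt (fun y => √(q y)) ((√(q x))⁻¹ • Q.toEuclideanLin x) x :=
    fun x hx => hsym.hasGradientAt_sqrt_inner_self (hQ.inner_toEuclideanLin_pos hx)
  refine ⟨fun x hx => ((hsqrt_q x hx).add (hp x)).sq, ?_⟩
  intro xj vj wj hxj hvj hpj hDpj
  exact hasGradientAt_sq_add_of_sqrt_data hvj (hsqrt_q xj hxj) (hDpj ▸ hp xj) hpj

/-- The structured Hermite surrogate of the paper:
`S(x) = (√(xᵀQx) + p(x))²` with `Q` symmetric positive definite and `p` the
kernel correction term.  (a) Away from the origin, `S` has gradient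
`∇S(x) = 2(√(xᵀQx)+p(x))(Qx/√(xᵀQx) + ∇p(x))`.  (b) The linear interpolation
conditions on `p` at a point `x_j ≠ 0` with data `v_j > 0`, `w_j` imply the
nonlinear Hermite conditions `S(x_j) = v_j` and `∇S(x_j) = w_j`. -/
theorem structured_surrogate_interpolation {N : ℕ} (hN : 1 ≤ N)
    (Q : Matrix (Fin N) (Fin N) ℝ) (hQ : Q.PosDef)
    (p : EuclideanSpace ℝ (Fin N) → ℝ)
    (Dp : EuclideanSpace ℝ (Fin N) → EuclideanSpace ℝ (Fin N))
    (hp : ∀ x, HasGradientAt p (Dp x) x) :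
    let q : EuclideanSpace ℝ (Fin N) → ℝ :=
      fun x => (inner ℝ x (Matrix.toEuclideanLin Q x) : ℝ)
    let S : EuclideanSpace ℝ (Fin N) → ℝ :=
      fun x => (Real.sqrt (q x) + p x) ^ 2
    (∀ x : EuclideanSpace ℝ (Fin N), x ≠ 0 →
      HasGradientAt S ((2 * (Real.sqrt (q x) + p x)) •
        ((Real.sqrt (q x))⁻¹ • Matrix.toEuclideanLin Q x + Dp x)) x) ∧
    (∀ (xj : EuclideanSpace ℝ (Fin N)) (vj : ℝ) (wj : EuclideanSpace ℝ (Fin N)),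
      xj ≠ 0 → 0 < vj →
      p xj = Real.sqrt vj - Real.sqrt (q xj) →
      Dp xj = (2 * Real.sqrt vj)⁻¹ • wj -
        (Real.sqrt (q xj))⁻¹ • Matrix.toEuclideanLin Q xj →
      S xj = vj ∧ HasGradientAt S wj xj) :=
  structured_surrogate_interpolation_general Q hQ p Dp hp
end
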